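/- arXiv:1510.01858 — 2 statements merged into one kernel-verified Lean document; each statement's English description precedes it below -/
import Mathlib

section
/- Truncated first moment of a bivariate normal vector (identity (EQ_GBM) = (EQ_GBM_true)): let T > 0, σ₁ ∈ ℝ, ρ ∈ (−1,1), and let (Y₁, Y₂) be bivariate normal with means (σ₁T, ρσ₁T), variances (T, T), and correlation ρ. Then for all k, h ∈ ℝ, with x̂ = (k − σ₁T)/√T and ŷ = (h − ρσ₁T)/√T, E[ Y₁ · 1_{{Y₁ > k}} · 1_{{Y₂ > h}} ] = σ₁T · Φ̄(x̂, ŷ, ρ) + √T · [ φ(x̂) · Φ̄((ŷ − ρx̂)/√(1−ρ²)) + ρ φ(ŷ) · Φ̄((x̂ − ρŷ)/√(1−ρ²)) ]. -/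
open MeasureTheory ProbabilityTheory

/-- The standard normal density `φ`. -/
noncomputable def stdNormalPDF (x : ℝ) : ℝ :=
  Real.exp (-x ^ 2 / 2) / Real.sqrt (2 * Real.pi)

/-- The standard normal upper tail `Φ̄(x) = 1 − Φ(x)`. -/
noncomputable def stdNormalTail (x : ℝ) : ℝ :=
  ∫ t in Set.Ioi x, stdNormalPDF t

/-- The standard bivariate normal upper tail `Φ̄(x, y, ρ) = P(Z₁ > x, Z₂ > y)` for a standard
bivariate normal pair with correlation `ρ`. -/
noncomputable def biNormalTail (x y ρ : ℝ) : ℝ :=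
  ∫ p in Set.Ioi x ×ˢ Set.Ioi y,
    Real.exp (-(p.1 ^ 2 - 2 * ρ * p.1 * p.2 + p.2 ^ 2) / (2 * (1 - ρ ^ 2))) /
      (2 * Real.pi * Real.sqrt (1 - ρ ^ 2))


/-! Write the event as `{ξ₀ > x̂, ξ₁ > (ŷ − ρ ξ₀)/c}` with `c = √(1 − ρ²)`. Integrating out `ξ₁` by
independence turns the left side into `∫_{x > x̂} (σ₁T + √T x) φ(x) Φ̄((ŷ − ρx)/c) dx`.
The bivariate density factors as `φ(x)` times the `N(ρx, c²)` density in the second variable, so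
by Fubini the constant part is `σ₁T Φ̄(x̂, ŷ, ρ)`. For the linear part, `x φ(x) Φ̄((ŷ − ρx)/c)` is
the derivative of `−φ(x) Φ̄((ŷ − ρx)/c) − ρ φ(ŷ) Φ̄((x − ρŷ)/c)`: the two terms coming from the
tails cancel by the symmetry `φ(x) φ((ŷ − ρx)/c) = φ(ŷ) φ((x − ρŷ)/c)` of the bivariate density,
and the boundary term at `x̂` is the bracket in the formula. -/

open Set Filter Real Topology

lemma gaussianPDFReal_zero_one : gaussianPDFReal 0 1 = stdNormalPDF := by
  ext x
  simp [gaussianPDFReal, stdNormalPDF, div_eq_inv_mul]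

lemma stdNormalPDF_nonneg (x : ℝ) : 0 ≤ stdNormalPDF x :=
  gaussianPDFReal_zero_one ▸ gaussianPDFReal_nonneg 0 1 x

@[fun_prop]
lemma continuous_stdNormalPDF : Continuous stdNormalPDF := by
  unfold stdNormalPDF
  fun_prop

lemma integrable_stdNormalPDF : Integrable stdNormalPDF :=
  gaussianPDFReal_zero_one ▸ integrable_gaussianPDFReal 0 1

lemma integral_stdNormalPDF : ∫ x, stdNormalPDF x = 1 :=
  gaussianPDFReal_zero_one ▸ integral_gaussianPDFReal_eq_one 0 one_ne_zero

lemma integrable_mul_stdNormalPDF : Integrable fun x => x * stdNormalPDF x := by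
  convert (integrable_mul_exp_neg_mul_sq (one_half_pos (α := ℝ))).div_const √(2 * π) using 2 with x
  rw [stdNormalPDF]
  ring_nf

lemma hasDerivAt_stdNormalPDF (x : ℝ) : HasDerivAt stdNormalPDF (-x * stdNormalPDF x) x := by
  refine (((hasDerivAt_pow 2 x).neg.div_const 2).exp.div_const √(2 * π)).congr_deriv ?_
  simp only [stdNormalPDF, Pi.neg_apply]
  push_cast
  ring

lemma tendsto_stdNormalPDF_atTop : Tendsto stdNormalPDF atTop (𝓝 0) := by
  have h : Tendsto (fun x : ℝ => -x ^ 2 / 2) atTop atBot :=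
    (tendsto_neg_atBot_iff.2 (tendsto_pow_atTop two_ne_zero)).atBot_div_const two_pos
  show Tendsto (fun x => exp (-x ^ 2 / 2) / √(2 * π)) atTop (𝓝 0)
  simpa only [Function.comp_def, zero_div] using (tendsto_exp_atBot.comp h).div_const √(2 * π)

lemma stdNormalPDF_mul_stdNormalPDF (u v : ℝ) :
    stdNormalPDF u * stdNormalPDF v = exp (-(u ^ 2 + v ^ 2) / 2) / (2 * π) := by
  unfold stdNormalPDF
  rw [div_mul_div_comm, ← exp_add, mul_self_sqrt (by positivity)]
  ring_nf

lemma setIntegral_gaussianReal_zero_one {s : Set ℝ} (hs : MeasurableSet s) (g : ℝ → ℝ) :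
    ∫ x in s, g x ∂gaussianReal 0 1 = ∫ x in s, stdNormalPDF x * g x := by
  rw [← integral_indicator hs, ← integral_indicator hs,
    integral_gaussianReal_eq_integral_smul one_ne_zero, gaussianPDFReal_zero_one]
  congr 1 with x
  by_cases hx : x ∈ s <;> simp [hx]

lemma measureReal_gaussianReal_Ioi (y : ℝ) : (gaussianReal 0 1).real (Ioi y) = stdNormalTail y := by
  simpa [stdNormalTail] using setIntegral_gaussianReal_zero_one measurableSet_Ioi fun _ => (1 : ℝ)

lemma stdNormalTail_nonneg (y : ℝ) : 0 ≤ stdNormalTail y :=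
  measureReal_gaussianReal_Ioi y ▸ measureReal_nonneg

lemma stdNormalTail_le_one (y : ℝ) : stdNormalTail y ≤ 1 :=
  measureReal_gaussianReal_Ioi y ▸ measureReal_le_one

lemma stdNormalTail_sub_stdNormalTail (x y : ℝ) :
    stdNormalTail x - stdNormalTail y = ∫ t in x..y, stdNormalPDF t :=
  intervalIntegral.integral_Ioi_sub_Ioi' integrable_stdNormalPDF.integrableOn
    integrable_stdNormalPDF.integrableOn

lemma hasDerivAt_stdNormalTail (x : ℝ) : HasDerivAt stdNormalTail (-stdNormalPDF x) x := by
  have h := (intervalIntegral.integral_hasDerivAt_right (a := 0) (b := x)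
    integrable_stdNormalPDF.intervalIntegrable
    (continuous_stdNormalPDF.stronglyMeasurableAtFilter _ _)
    continuous_stdNormalPDF.continuousAt).const_sub (stdNormalTail 0)
  refine h.congr_of_eventuallyEq (Eventually.of_forall fun y => ?_)
  dsimp only
  rw [← stdNormalTail_sub_stdNormalTail 0 y, sub_sub_cancel]

lemma continuous_stdNormalTail : Continuous stdNormalTail :=
  continuous_iff_continuousAt.2 fun x => (hasDerivAt_stdNormalTail x).continuousAt

lemma tendsto_stdNormalTail_atTop : Tendsto stdNormalTail atTop (𝓝 0) := by
  have h := (intervalIntegral_tendsto_integral_Ioi 0 integrable_stdNormalPDF.integrableOn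
    tendsto_id).const_sub (stdNormalTail 0)
  simp only [id] at h
  rw [← stdNormalTail, sub_self] at h
  refine h.congr fun y => ?_
  rw [← stdNormalTail_sub_stdNormalTail 0 y, sub_sub_cancel]

lemma MeasureTheory.Integrable.mul_stdNormalTail_comp {f m : ℝ → ℝ} (hf : Integrable f)
    (hm : Measurable m) :
    Integrable fun x => f x * stdNormalTail (m x) :=
  hf.mul_bdd (continuous_stdNormalTail.measurable.comp hm).aestronglyMeasurable
    (ae_of_all _ fun x => by
      rw [norm_of_nonneg (stdNormalTail_nonneg _)]
      exact stdNormalTail_le_one _)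

lemma integral_comp_sub_div (g : ℝ → ℝ) (b : ℝ) {c : ℝ} (hc : 0 < c) :
    ∫ z, g ((z - b) / c) = c * ∫ u, g u := by
  rw [integral_sub_right_eq_self (fun z => g (z / c)), Measure.integral_comp_div,
    abs_of_pos hc, smul_eq_mul]

lemma setIntegral_Ioi_comp_sub_div (g : ℝ → ℝ) (b y : ℝ) {c : ℝ} (hc : 0 < c) :
    ∫ z in Ioi y, g ((z - b) / c) = c * ∫ u in Ioi ((y - b) / c), g u := by
  rw [← integral_indicator measurableSet_Ioi, ← integral_indicator measurableSet_Ioi,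
    ← integral_comp_sub_div _ b hc]
  congr 1 with z
  simp only [indicator, mem_Ioi, div_lt_div_iff_of_pos_right hc, sub_lt_sub_iff_right]

lemma stdNormalPDF_mul_stdNormalPDF_sub_mul_div_comm {ρ : ℝ} (hρ : ρ ^ 2 < 1) (x y : ℝ) :
    stdNormalPDF x * stdNormalPDF ((y - ρ * x) / √(1 - ρ ^ 2))
      = stdNormalPDF y * stdNormalPDF ((x - ρ * y) / √(1 - ρ ^ 2)) := by
  have hc : 1 - ρ ^ 2 ≠ 0 := by linarith
  rw [stdNormalPDF_mul_stdNormalPDF, stdNormalPDF_mul_stdNormalPDF, div_pow, div_pow,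
    sq_sqrt (by linarith)]
  congr 3
  field_simp
  ring

lemma biNormalDensity_eq {ρ : ℝ} (hρ : ρ ^ 2 < 1) (x z : ℝ) :
    exp (-(x ^ 2 - 2 * ρ * x * z + z ^ 2) / (2 * (1 - ρ ^ 2))) / (2 * π * √(1 - ρ ^ 2))
      = stdNormalPDF x * (stdNormalPDF ((z - ρ * x) / √(1 - ρ ^ 2)) / √(1 - ρ ^ 2)) := by
  have hc : 1 - ρ ^ 2 ≠ 0 := by linarith
  rw [← mul_div_assoc, stdNormalPDF_mul_stdNormalPDF, div_div, div_pow, sq_sqrt (by linarith)]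
  congr 2
  field_simp
  ring

lemma integrable_biNormalDensity {ρ : ℝ} (hρ : ρ ^ 2 < 1) :
    Integrable (fun p : ℝ × ℝ =>
      stdNormalPDF p.1 * (stdNormalPDF ((p.2 - ρ * p.1) / √(1 - ρ ^ 2)) / √(1 - ρ ^ 2)))
      (volume.prod volume) := by
  have hc : 0 < √(1 - ρ ^ 2) := sqrt_pos.2 (by linarith)
  have hconditional (x : ℝ) :
      ∫ z, stdNormalPDF ((z - ρ * x) / √(1 - ρ ^ 2)) / √(1 - ρ ^ 2) = 1 := by
    rw [integral_div, integral_comp_sub_div _ _ hc, integral_stdNormalPDF, mul_one,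
      div_self hc.ne']
  refine (integrable_prod_iff (by fun_prop)).2 ⟨ae_of_all _ fun x => ?_, ?_⟩
  · dsimp only
    exact (((integrable_stdNormalPDF.comp_div hc.ne').comp_sub_right (ρ * x)).div_const _).const_mul
      _
  · refine integrable_stdNormalPDF.congr (ae_of_all _ fun x => ?_)
    have hnonneg (z : ℝ) :
        0 ≤ stdNormalPDF x * (stdNormalPDF ((z - ρ * x) / √(1 - ρ ^ 2)) / √(1 - ρ ^ 2)) :=
      mul_nonneg (stdNormalPDF_nonneg _) (div_nonneg (stdNormalPDF_nonneg _) hc.le)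
    simp only [norm_of_nonneg (hnonneg _), integral_const_mul, hconditional, mul_one]

lemma biNormalTail_eq_integral {ρ : ℝ} (hρ : ρ ^ 2 < 1) (x y : ℝ) :
    biNormalTail x y ρ
      = ∫ t in Ioi x, stdNormalPDF t * stdNormalTail ((y - ρ * t) / √(1 - ρ ^ 2)) := by
  have hc : 0 < √(1 - ρ ^ 2) := sqrt_pos.2 (by linarith)
  simp only [biNormalTail, biNormalDensity_eq hρ, Measure.volume_eq_prod]
  rw [setIntegral_prod _ (integrable_biNormalDensity hρ).integrableOn]
  refine setIntegral_congr_fun measurableSet_Ioi fun t _ => ?_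
  dsimp only
  rw [integral_const_mul, integral_div, setIntegral_Ioi_comp_sub_div _ _ _ hc, stdNormalTail,
    mul_div_cancel_left₀ _ hc.ne']

lemma hasDerivAt_stdNormalPDF_mul_stdNormalTail_sub {ρ : ℝ} (hρ : ρ ^ 2 < 1) (y x : ℝ) :
    HasDerivAt
      (fun t => -(stdNormalPDF t * stdNormalTail ((y - ρ * t) / √(1 - ρ ^ 2)))
        - ρ * stdNormalPDF y * stdNormalTail ((t - ρ * y) / √(1 - ρ ^ 2)))
      (x * stdNormalPDF x * stdNormalTail ((y - ρ * x) / √(1 - ρ ^ 2))) x := by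
  set c := √(1 - ρ ^ 2)
  have hm : HasDerivAt (fun t => (y - ρ * t) / c) (-ρ / c) x := by
    simpa using ((hasDerivAt_id x).const_mul ρ).const_sub y |>.div_const c
  have hn : HasDerivAt (fun t => (t - ρ * y) / c) (1 / c) x :=
    ((hasDerivAt_id x).sub_const (ρ * y)).div_const c
  have h := ((hasDerivAt_stdNormalPDF x).mul ((hasDerivAt_stdNormalTail _).comp x hm)).neg.sub
    (((hasDerivAt_stdNormalTail _).comp x hn).const_mul (ρ * stdNormalPDF y))
  refine h.congr_deriv ?_
  simp only [Function.comp_apply]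
  linear_combination (-ρ / c) * stdNormalPDF_mul_stdNormalPDF_sub_mul_div_comm hρ x y

lemma integral_Ioi_mul_stdNormalPDF_mul_stdNormalTail {ρ : ℝ} (hρ : ρ ^ 2 < 1) (x y : ℝ) :
    ∫ t in Ioi x, t * stdNormalPDF t * stdNormalTail ((y - ρ * t) / √(1 - ρ ^ 2))
      = stdNormalPDF x * stdNormalTail ((y - ρ * x) / √(1 - ρ ^ 2))
        + ρ * stdNormalPDF y * stdNormalTail ((x - ρ * y) / √(1 - ρ ^ 2)) := by
  have hc : 0 < √(1 - ρ ^ 2) := sqrt_pos.2 (by linarith)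
  have hfirst : Tendsto (fun t => stdNormalPDF t * stdNormalTail ((y - ρ * t) / √(1 - ρ ^ 2)))
      atTop (𝓝 0) :=
    squeeze_zero (fun t => mul_nonneg (stdNormalPDF_nonneg t) (stdNormalTail_nonneg _))
      (fun t => mul_le_of_le_one_right (stdNormalPDF_nonneg t) (stdNormalTail_le_one _))
      tendsto_stdNormalPDF_atTop
  have hsecond : Tendsto (fun t => stdNormalTail ((t - ρ * y) / √(1 - ρ ^ 2))) atTop (𝓝 0) :=
    tendsto_stdNormalTail_atTop.comp
      ((tendsto_atTop_add_const_right _ _ tendsto_id).atTop_div_const hc)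
  rw [integral_Ioi_of_hasDerivAt_of_tendsto'
    (fun t _ => hasDerivAt_stdNormalPDF_mul_stdNormalTail_sub hρ y t)
    (integrable_mul_stdNormalPDF.mul_stdNormalTail_comp (by fun_prop)).integrableOn
    (by simpa using hfirst.neg.sub (hsecond.const_mul (ρ * stdNormalPDF y)))]
  ring

section Independence

variable {Ω α : Type*} [MeasurableSpace Ω] [MeasurableSpace α]

lemma setIntegral_prod_fst_of_lt_snd {ν₀ : Measure α} {ν₁ : Measure ℝ} [SFinite ν₀]
    [IsFiniteMeasure ν₁] {f m : α → ℝ} {s : Set α} (hf : Integrable f ν₀) (hm : Measurable m)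
    (hs : MeasurableSet s) :
    ∫ p in {p : α × ℝ | p.1 ∈ s ∧ m p.1 < p.2}, f p.1 ∂ν₀.prod ν₁
      = ∫ x in s, ν₁.real (Ioi (m x)) * f x ∂ν₀ := by
  have hA : MeasurableSet {p : α × ℝ | p.1 ∈ s ∧ m p.1 < p.2} :=
    (measurable_fst hs).inter (measurableSet_lt (hm.comp measurable_fst) measurable_snd)
  rw [← integral_indicator hA, integral_prod _ ((hf.comp_fst ν₁).indicator hA),
    ← integral_indicator hs]
  congr 1 with x
  by_cases hx : x ∈ s
  · have hsection :
        (fun y => {p : α × ℝ | p.1 ∈ s ∧ m p.1 < p.2}.indicator (fun p => f p.1) (x, y))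
          = (Ioi (m x)).indicator fun _ => f x := by
      ext y
      simp [indicator, hx]
    rw [hsection, integral_indicator_const _ measurableSet_Ioi, indicator_of_mem hx, smul_eq_mul]
  · simp [indicator, hx]

lemma setIntegral_of_indepFun_of_lt {μ : Measure Ω} [IsFiniteMeasure μ] {X : Ω → α} {Y : Ω → ℝ}
    (hX : Measurable X) (hY : Measurable Y) (hXY : IndepFun X Y μ) {f m : α → ℝ} {s : Set α}
    (hf : Integrable f (μ.map X)) (hm : Measurable m) (hs : MeasurableSet s) :
    ∫ ω in {ω | X ω ∈ s ∧ m (X ω) < Y ω}, f (X ω) ∂μ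
      = ∫ x in s, (μ.map Y).real (Ioi (m x)) * f x ∂μ.map X := by
  have hA : MeasurableSet {p : α × ℝ | p.1 ∈ s ∧ m p.1 < p.2} :=
    (measurable_fst hs).inter (measurableSet_lt (hm.comp measurable_fst) measurable_snd)
  have hlaw := (indepFun_iff_map_prod_eq_prod_map_map hX.aemeasurable hY.aemeasurable).1 hXY
  rw [← setIntegral_prod_fst_of_lt_snd hf hm hs, ← hlaw, setIntegral_map hA
    (by rw [hlaw]; exact (hf.comp_fst _).aestronglyMeasurable) (hX.prodMk hY).aemeasurable]
  rfl

end Independence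

lemma sub_div_lt_iff_lt_add_mul {K : Type*} [Field K] [LinearOrder K] [IsStrictOrderedRing K]
    {s : K} (hs : 0 < s) (a k x : K) : (k - a) / s < x ↔ k < a + s * x := by
  rw [div_lt_iff₀ hs, sub_lt_iff_lt_add', mul_comm]

/-- **Truncated first moment of a bivariate normal vector** (identity (EQ_GBM)). For `(Y₁,Y₂)`
bivariate normal with means `(σ₁T, ρσ₁T)`, variances `(T, T)` and correlation `ρ`, and
`x̂ = (k − σ₁T)/√T`, `ŷ = (h − ρσ₁T)/√T`,
`E[Y₁ 1_{Y₁ > k} 1_{Y₂ > h}] = σ₁T Φ̄(x̂, ŷ, ρ)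
  + √T (φ(x̂)Φ̄((ŷ − ρx̂)/√(1−ρ²)) + ρφ(ŷ)Φ̄((x̂ − ρŷ)/√(1−ρ²)))`. -/
theorem bivariate_normal_truncated_first_moment
    {Ω : Type*} [MeasurableSpace Ω] (μ : Measure Ω) [IsProbabilityMeasure μ]
    (ξ : Fin 2 → Ω → ℝ) (hmξ : ∀ i, Measurable (ξ i))
    (hindep : iIndepFun ξ μ)
    (hgauss : ∀ i, Measure.map (ξ i) μ = gaussianReal 0 1)
    (T σ₁ ρ : ℝ) (hT : 0 < T) (hρ₁ : -1 < ρ) (hρ₂ : ρ < 1)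
    (k h : ℝ) :
    ∫ ω in {ω | k < σ₁ * T + Real.sqrt T * ξ 0 ω
        ∧ h < ρ * σ₁ * T + Real.sqrt T * (ρ * ξ 0 ω + Real.sqrt (1 - ρ ^ 2) * ξ 1 ω)},
      (σ₁ * T + Real.sqrt T * ξ 0 ω) ∂μ
      = σ₁ * T * biNormalTail ((k - σ₁ * T) / Real.sqrt T)
          ((h - ρ * σ₁ * T) / Real.sqrt T) ρ
        + Real.sqrt T *
          (stdNormalPDF ((k - σ₁ * T) / Real.sqrt T) *
            stdNormalTail (((h - ρ * σ₁ * T) / Real.sqrt T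
                - ρ * ((k - σ₁ * T) / Real.sqrt T)) / Real.sqrt (1 - ρ ^ 2))
          + ρ * stdNormalPDF ((h - ρ * σ₁ * T) / Real.sqrt T) *
            stdNormalTail (((k - σ₁ * T) / Real.sqrt T
                - ρ * ((h - ρ * σ₁ * T) / Real.sqrt T)) / Real.sqrt (1 - ρ ^ 2))) := by
  have hρ : ρ ^ 2 < 1 := by nlinarith
  have hs : 0 < √T := sqrt_pos.2 hT
  have hc : 0 < √(1 - ρ ^ 2) := sqrt_pos.2 (by linarith)
  have hset : {ω | k < σ₁ * T + √T * ξ 0 ω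
        ∧ h < ρ * σ₁ * T + √T * (ρ * ξ 0 ω + √(1 - ρ ^ 2) * ξ 1 ω)}
      = {ω | ξ 0 ω ∈ Ioi ((k - σ₁ * T) / √T)
        ∧ ((h - ρ * σ₁ * T) / √T - ρ * ξ 0 ω) / √(1 - ρ ^ 2) < ξ 1 ω} := by
    ext ω
    simp only [mem_ofPred_eq, mem_Ioi, sub_div_lt_iff_lt_add_mul hs, sub_div_lt_iff_lt_add_mul hc]
  have hint : Integrable (fun x => σ₁ * T + √T * x) (μ.map (ξ 0)) := by
    rw [hgauss 0]
    exact (integrable_const _).add (((memLp_id_gaussianReal 1).integrable le_rfl).const_mul _)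
  have hreduce := setIntegral_of_indepFun_of_lt (hmξ 0) (hmξ 1) (hindep.indepFun zero_ne_one) hint
    (m := fun x => ((h - ρ * σ₁ * T) / √T - ρ * x) / √(1 - ρ ^ 2)) (by fun_prop)
    (measurableSet_Ioi (a := (k - σ₁ * T) / √T))
  rw [hset, hreduce, hgauss 0, hgauss 1, setIntegral_gaussianReal_zero_one measurableSet_Ioi]
  simp only [measureReal_gaussianReal_Ioi]
  rw [biNormalTail_eq_integral hρ, ← integral_Ioi_mul_stdNormalPDF_mul_stdNormalTail hρ,
    ← integral_const_mul, ← integral_const_mul, ← integral_add]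
  · congr 1 with x
    ring
  · exact ((integrable_stdNormalPDF.mul_stdNormalTail_comp (by fun_prop)).const_mul
      _).integrableOn
  · exact ((integrable_mul_stdNormalPDF.mul_stdNormalTail_comp (by fun_prop)).const_mul
      _).integrableOn
end

section
/- Pathwise differentiation of a two-asset correlation call payoff under geometric Brownian motions (identity (dC)): let T > 0, ρ ∈ (−1,1), and let (W₁, W₂) be bivariate normal with mean zero, Var(W₁) = Var(W₂) = T, and Cov(W₁, W₂) = ρT; let s₁, s₂, K, H > 0 and r₁, r₂, σ₂ ∈ ℝ, and set S₂ = s₂ exp((r₂ − σ₂²/2)T + σ₂W₂). Then the function C(σ) = E[ (s₁ exp((r₁ − σ²/2)T + σW₁) − K)⁺ · 1_{{S₂ > H}} ] is differentiable at every σ > 0, with C′(σ) = E[ s₁ exp((r₁ − σ²/2)T + σW₁) · (W₁ − σT) · 1_{{s₁ exp((r₁ − σ²/2)T + σW₁) > K}} · 1_{{S₂ > H}} ]. -/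
open MeasureTheory ProbabilityTheory

/-! For each sample the payoff `(S₁(σ) − K)⁺ 1_{S₂ > H}` is Lipschitz in `σ` near the
given volatility, with constant `C (|W₁| + c) e^{c |W₁|}`, integrable since Gaussian variables have
all exponential moments; and it is differentiable at `σ` off the event `S₁(σ) = K`, which is null
because `S₁(σ)` is an injective function of the atomless variable `W₁`. Dominated differentiation
under the integral sign gives the formula. -/

theorem HasDerivAt.max_sub_const_zero {f : ℝ → ℝ} {f' x K : ℝ} (hf : HasDerivAt f f' x)
    (hK : f x ≠ K) :
    HasDerivAt (fun y => max (f y - K) 0) (if K < f x then f' else 0) x := by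
  rcases hK.lt_or_gt with hlt | hgt
  · rw [if_neg hlt.not_gt]
    refine (hasDerivAt_const x 0).congr_of_eventuallyEq ?_
    filter_upwards [hf.continuousAt.eventually_lt continuousAt_const hlt] with y hy
    exact max_eq_right (by linarith)
  · rw [if_pos hgt]
    refine (hf.sub_const K).congr_of_eventuallyEq ?_
    filter_upwards [continuousAt_const.eventually_lt hf.continuousAt hgt] with y hy
    exact max_eq_left (by linarith)

theorem LipschitzOnWith.max_sub_const_zero {f : ℝ → ℝ} {C : NNReal} {s : Set ℝ}
    (hf : LipschitzOnWith C f s) (K : ℝ) :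
    LipschitzOnWith C (fun y => max (f y - K) 0) s := by
  have h_trunc : LipschitzWith 1 (fun y : ℝ => max (y - K) 0) :=
    (IsometryEquiv.subRight K).isometry.lipschitz.max_const 0
  simpa only [one_mul, Function.comp_def] using h_trunc.comp_lipschitzOnWith hf

theorem hasDerivAt_integral_max_sub_const {Ω : Type*} [MeasurableSpace Ω] {μ : Measure Ω}
    [IsFiniteMeasure μ] {F F' : ℝ → Ω → ℝ} {bound : Ω → ℝ} {x₀ ε : ℝ} (K : ℝ) (hε : 0 < ε)
    (hF_meas : ∀ x, Measurable (F x)) (hF'_meas : Measurable (F' x₀))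
    (hF_int : Integrable (F x₀) μ) (h_bound_int : Integrable bound μ)
    (h_diff : ∀ ω, ∀ x ∈ Metric.ball x₀ ε, HasDerivAt (F · ω) (F' x ω) x)
    (h_bound : ∀ ω, ∀ x ∈ Metric.ball x₀ ε, |F' x ω| ≤ bound ω)
    (h_atom : ∀ᵐ ω ∂μ, F x₀ ω ≠ K) :
    HasDerivAt (fun x => ∫ ω, max (F x ω - K) 0 ∂μ)
      (∫ ω in {ω | K < F x₀ ω}, F' x₀ ω ∂μ) x₀ := by
  have h_lip : ∀ ω, LipschitzOnWith (Real.nnabs (bound ω))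
      (fun x => max (F x ω - K) 0) (Metric.ball x₀ ε) := fun ω =>
    ((convex_ball x₀ ε).lipschitzOnWith_of_nnnorm_hasDerivWithin_le
      (fun x hx => (h_diff ω x hx).hasDerivWithinAt) fun x hx => by
        rw [← NNReal.coe_le_coe, coe_nnnorm, Real.coe_nnabs, Real.norm_eq_abs]
        exact (h_bound ω x hx).trans (le_abs_self _)).max_sub_const_zero K
  have hB : MeasurableSet {ω | K < F x₀ ω} := measurableSet_lt measurable_const (hF_meas x₀)
  rw [← integral_indicator hB]
  refine (hasDerivAt_integral_of_dominated_loc_of_lip (Metric.ball_mem_nhds x₀ hε)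
    (Filter.Eventually.of_forall fun x =>
      ((hF_meas x).sub_const K).max measurable_const |>.aestronglyMeasurable)
    (hF_int.sub (integrable_const K)).pos_part
    ((hF'_meas.indicator hB).aestronglyMeasurable)
    (Filter.Eventually.of_forall h_lip) h_bound_int ?_).2
  filter_upwards [h_atom] with ω hω
  simpa only [Set.indicator_apply, Set.mem_ofPred_eq] using
    (h_diff ω x₀ (Metric.mem_ball_self hε)).max_sub_const_zero hω

/-- The price at time `T` of a geometric Brownian motion started at `s₀`, with drift `r` and
volatility `σ`, whose driving Brownian motion has `W_T = w`. -/
noncomputable def gbmPrice (s₀ r σ T w : ℝ) : ℝ := s₀ * Real.exp ((r - σ ^ 2 / 2) * T + σ * w)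

section gbmPrice

variable (s₀ r : ℝ) {T : ℝ}

theorem hasDerivAt_gbmPrice_volatility (T σ w : ℝ) :
    HasDerivAt (fun v => gbmPrice s₀ r v T w) (gbmPrice s₀ r σ T w * (w - σ * T)) σ := by
  have h_exponent : HasDerivAt (fun v : ℝ => (r - v ^ 2 / 2) * T + v * w) (w - σ * T) σ := by
    refine (((((hasDerivAt_pow 2 σ).div_const 2).const_sub r).mul_const T).add
      ((hasDerivAt_id σ).mul_const w)).congr_deriv ?_
    norm_num; ring
  exact (h_exponent.exp.const_mul s₀).congr_deriv (by rw [gbmPrice]; ring)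

theorem gbmPrice_injective (T : ℝ) {σ : ℝ} (hs₀ : s₀ ≠ 0) (hσ : σ ≠ 0) :
    Function.Injective (gbmPrice s₀ r σ T) := fun a b h => by
  simpa [gbmPrice, hs₀, hσ] using h

theorem abs_gbmPrice_le (hT : 0 ≤ T) (σ w : ℝ) :
    |gbmPrice s₀ r σ T w| ≤ |s₀| * Real.exp (|r| * T) * Real.exp (|σ| * |w|) := by
  rw [gbmPrice, abs_mul, Real.abs_exp, mul_assoc, ← Real.exp_add]
  refine mul_le_mul_of_nonneg_left (Real.exp_le_exp.2 ?_) (abs_nonneg s₀)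
  have h_drift : (r - σ ^ 2 / 2) * T ≤ |r| * T :=
    mul_le_mul_of_nonneg_right (by linarith [le_abs_self r, sq_nonneg σ]) hT
  have h_noise : σ * w ≤ |σ| * |w| := by rw [← abs_mul]; exact le_abs_self _
  linarith

theorem abs_gbmPrice_mul_sub_le (hT : 0 ≤ T) {σ c : ℝ} (hσ : |σ| ≤ c) (w : ℝ) :
    |gbmPrice s₀ r σ T w * (w - σ * T)| ≤
      |s₀| * Real.exp (|r| * T) * ((|w| + c * T) * Real.exp (c * |w|)) := by
  have h_price : |gbmPrice s₀ r σ T w| ≤ |s₀| * Real.exp (|r| * T) * Real.exp (c * |w|) :=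
    (abs_gbmPrice_le s₀ r hT σ w).trans (by gcongr)
  have h_factor : |w - σ * T| ≤ |w| + c * T := by
    calc |w - σ * T| ≤ |w| + |σ * T| := abs_sub _ _
      _ = |w| + |σ| * T := by rw [abs_mul, abs_of_nonneg hT]
      _ ≤ |w| + c * T := by gcongr
  rw [abs_mul]
  calc |gbmPrice s₀ r σ T w| * |w - σ * T|
      ≤ |s₀| * Real.exp (|r| * T) * Real.exp (c * |w|) * (|w| + c * T) := by gcongr
    _ = _ := by ring

end gbmPrice

theorem hasDerivAt_setIntegral_max_gbmPrice_sub {Ω : Type*} [MeasurableSpace Ω]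
    {μ : Measure Ω} [IsFiniteMeasure μ] {W : Ω → ℝ} (hW : Measurable W)
    (h_exp : ∀ t, Integrable (fun ω => Real.exp (t * W ω)) μ) (h_atom : ∀ c, ∀ᵐ ω ∂μ, W ω ≠ c)
    (A : Set Ω) {s₀ T σ : ℝ} (hs₀ : s₀ ≠ 0) (hT : 0 ≤ T) (hσ : σ ≠ 0) (r K : ℝ) :
    HasDerivAt (fun v => ∫ ω in A, max (gbmPrice s₀ r v T (W ω) - K) 0 ∂μ)
      (∫ ω in {ω | K < gbmPrice s₀ r σ T (W ω)} ∩ A,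
        gbmPrice s₀ r σ T (W ω) * (W ω - σ * T) ∂μ) σ := by
  set c := |σ| + 1
  have h_exp_abs (t : ℝ) : Integrable (fun ω => Real.exp (t * |W ω|)) (μ.restrict A) :=
    (integrable_exp_mul_abs (h_exp t) (h_exp (-t))).restrict
  have h_abs_mul_exp : Integrable (fun ω => |W ω| * Real.exp (c * |W ω|)) (μ.restrict A) := by
    refine Integrable.restrict ?_
    simpa using integrable_pow_abs_mul_exp_add_of_integrable_exp_mul (v := 0) (t := c + 1)
      (by simpa using h_exp (c + 1)) (by simpa using h_exp (-(c + 1))) (by positivity)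
      (by rw [abs_of_pos (by positivity)]; linarith) 1
  have h_meas (v : ℝ) : Measurable fun ω => gbmPrice s₀ r v T (W ω) := by
    unfold gbmPrice; fun_prop
  rw [← Measure.restrict_restrict (measurableSet_lt measurable_const (h_meas σ))]
  refine hasDerivAt_integral_max_sub_const K one_pos h_meas
    (F' := fun v ω => gbmPrice s₀ r v T (W ω) * (W ω - v * T))
    (bound := fun ω => |s₀| * Real.exp (|r| * T) * ((|W ω| + c * T) * Real.exp (c * |W ω|)))
    ((h_meas σ).mul (by fun_prop))
    (((h_exp_abs |σ|).const_mul _).mono' (h_meas σ).aestronglyMeasurable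
      (ae_of_all _ fun ω => abs_gbmPrice_le s₀ r hT σ (W ω)))
    (((h_abs_mul_exp.add ((h_exp_abs c).const_mul (c * T))).const_mul
      (|s₀| * Real.exp (|r| * T))).congr (ae_of_all _ fun ω => by simp only [Pi.add_apply]; ring))
    (fun ω v _ => hasDerivAt_gbmPrice_volatility s₀ r T v (W ω)) ?_ ?_
  · intro ω v hv
    refine abs_gbmPrice_mul_sub_le s₀ r hT ?_ (W ω)
    have := abs_sub_abs_le_abs_sub v σ
    rw [Metric.mem_ball, Real.dist_eq] at hv
    linarith
  · by_cases h_strike : ∃ w, gbmPrice s₀ r σ T w = K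
    · obtain ⟨w, hw⟩ := h_strike
      filter_upwards [ae_restrict_of_ae (h_atom w)] with ω hω h_eq
      exact hω (gbmPrice_injective s₀ r T hs₀ hσ (h_eq.trans hw.symm))
    · exact ae_of_all _ fun ω h_eq => h_strike ⟨W ω, h_eq⟩

section gaussianReal

variable {Ω : Type*} [MeasurableSpace Ω] {μ : Measure Ω} {X : Ω → ℝ} {m : ℝ} {v : NNReal}

theorem integrable_exp_mul_of_map_eq_gaussianReal (hX : Measurable X)
    (h_law : μ.map X = gaussianReal m v) (t : ℝ) :
    Integrable (fun ω => Real.exp (t * X ω)) μ := by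
  have h := integrable_exp_mul_gaussianReal (μ := m) (v := v) t
  rw [← h_law] at h
  exact (integrable_map_measure (by fun_prop) hX.aemeasurable).1 h

theorem ae_ne_of_map_eq_gaussianReal (hX : Measurable X) (h_law : μ.map X = gaussianReal m v)
    (hv : v ≠ 0) (c : ℝ) : ∀ᵐ ω ∂μ, X ω ≠ c := by
  refine ae_of_ae_map (p := (· ≠ c)) hX.aemeasurable ?_
  rw [h_law]
  exact ae_iff.2 (by simpa using gaussianReal_absolutelyContinuous m hv (measure_singleton c))

end gaussianReal

theorem two_asset_correlation_call_vega_general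
    {Ω : Type*} [MeasurableSpace Ω] (μ : Measure Ω) [IsProbabilityMeasure μ]
    (ξ : Fin 2 → Ω → ℝ) (hmξ : ∀ i, Measurable (ξ i))
    (hgauss : ∀ i, Measure.map (ξ i) μ = gaussianReal 0 1)
    (T ρ : ℝ) (hT : 0 < T)
    (s₁ s₂ K H : ℝ) (hs₁ : 0 < s₁)
    (r₁ r₂ σ₂ : ℝ)
    (σ : ℝ) (hσ : 0 < σ) :
    HasDerivAt
      (fun σ' : ℝ =>
        ∫ ω in {ω | H < s₂ * Real.exp ((r₂ - σ₂ ^ 2 / 2) * T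
            + σ₂ * (Real.sqrt T * (ρ * ξ 0 ω + Real.sqrt (1 - ρ ^ 2) * ξ 1 ω)))},
          max (s₁ * Real.exp ((r₁ - σ' ^ 2 / 2) * T + σ' * (Real.sqrt T * ξ 0 ω)) - K) 0 ∂μ)
      (∫ ω in {ω | K < s₁ * Real.exp ((r₁ - σ ^ 2 / 2) * T + σ * (Real.sqrt T * ξ 0 ω))}
          ∩ {ω | H < s₂ * Real.exp ((r₂ - σ₂ ^ 2 / 2) * T
            + σ₂ * (Real.sqrt T * (ρ * ξ 0 ω + Real.sqrt (1 - ρ ^ 2) * ξ 1 ω)))},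
        s₁ * Real.exp ((r₁ - σ ^ 2 / 2) * T + σ * (Real.sqrt T * ξ 0 ω)) *
          (Real.sqrt T * ξ 0 ω - σ * T) ∂μ)
      σ := by
  have hW₁ : Measurable fun ω => Real.sqrt T * ξ 0 ω := (hmξ 0).const_mul _
  have h_law : μ.map (fun ω => Real.sqrt T * ξ 0 ω) = gaussianReal 0 T.toNNReal := by
    rw [← Function.comp_def (Real.sqrt T * ·), ← Measure.map_map (measurable_const_mul _) (hmξ 0),
      hgauss 0, gaussianReal_map_const_mul]
    congr 1
    · simp
    · ext; simp [Real.sq_sqrt hT.le, hT.le]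
  exact hasDerivAt_setIntegral_max_gbmPrice_sub hW₁
    (integrable_exp_mul_of_map_eq_gaussianReal hW₁ h_law)
    (ae_ne_of_map_eq_gaussianReal hW₁ h_law (Real.toNNReal_pos.2 hT).ne') _
    hs₁.ne' hT.le hσ.ne' r₁ K

/-- **Pathwise differentiation of a two-asset correlation call payoff under geometric Brownian
motions** (identity (dC)). With `(W₁, W₂)` bivariate normal, mean zero, variances `T` and
covariance `ρT`, `S₂ = s₂ exp((r₂ − σ₂²/2)T + σ₂W₂)`, the function
`C(σ) = E[(s₁ e^{(r₁ − σ²/2)T + σW₁} − K)⁺ 1_{S₂ > H}]` is differentiable at every `σ > 0`,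
with `C'(σ) = E[s₁ e^{(r₁ − σ²/2)T + σW₁} (W₁ − σT) 1_{s₁ e^{(r₁ − σ²/2)T + σW₁} > K} 1_{S₂ > H}]`. -/
theorem two_asset_correlation_call_vega
    {Ω : Type*} [MeasurableSpace Ω] (μ : Measure Ω) [IsProbabilityMeasure μ]
    (ξ : Fin 2 → Ω → ℝ) (hmξ : ∀ i, Measurable (ξ i))
    (hindep : iIndepFun ξ μ)
    (hgauss : ∀ i, Measure.map (ξ i) μ = gaussianReal 0 1)
    (T ρ : ℝ) (hT : 0 < T) (hρ₁ : -1 < ρ) (hρ₂ : ρ < 1)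
    (s₁ s₂ K H : ℝ) (hs₁ : 0 < s₁) (hs₂ : 0 < s₂) (hK : 0 < K) (hH : 0 < H)
    (r₁ r₂ σ₂ : ℝ)
    (σ : ℝ) (hσ : 0 < σ) :
    HasDerivAt
      (fun σ' : ℝ =>
        ∫ ω in {ω | H < s₂ * Real.exp ((r₂ - σ₂ ^ 2 / 2) * T
            + σ₂ * (Real.sqrt T * (ρ * ξ 0 ω + Real.sqrt (1 - ρ ^ 2) * ξ 1 ω)))},
          max (s₁ * Real.exp ((r₁ - σ' ^ 2 / 2) * T + σ' * (Real.sqrt T * ξ 0 ω)) - K) 0 ∂μ)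
      (∫ ω in {ω | K < s₁ * Real.exp ((r₁ - σ ^ 2 / 2) * T + σ * (Real.sqrt T * ξ 0 ω))}
          ∩ {ω | H < s₂ * Real.exp ((r₂ - σ₂ ^ 2 / 2) * T
            + σ₂ * (Real.sqrt T * (ρ * ξ 0 ω + Real.sqrt (1 - ρ ^ 2) * ξ 1 ω)))},
        s₁ * Real.exp ((r₁ - σ ^ 2 / 2) * T + σ * (Real.sqrt T * ξ 0 ω)) *
          (Real.sqrt T * ξ 0 ω - σ * T) ∂μ)
      σ :=
  two_asset_correlation_call_vega_general μ ξ hmξ hgauss T ρ hT s₁ s₂ K H hs₁ r₁ r₂ σ₂ σ hσ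
end
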